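/- Let (M',0) be a germ of real analytic hypersurface of ℂ^n, n ≥ 2, encoded in normal coordinates by Θ̄', with conjugate series expansion Θ'(ζ',w',z') = Σ_{β∈ℕ^{n-1}, β≠0} ζ'^β Θ'_β(w',z') and convention Θ'_0(w',z') := z'. If M' is Segre-nondegenerate at 0, i.e. there exist β^1,…,β^{n-1} ∈ ℕ^{n-1}∖{0} such that det(∂Θ'_{β^i}/∂w'_j(w',0))_{1≤i,j≤n-1} ≢ 0 in ℂ{w'}, then M' is holomorphically nondegenerate at 0: with the same β^1,…,β^{n-1} and β^n := 0, det(∂Θ'_{β^i}/∂t'_j(w',z'))_{1≤i,j≤n} ≢ 0 in ℂ{w',z'}, where t' = (w',z'). -/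

import Mathlib

open scoped Classical

noncomputable section

/-- Total degree of a multi-exponent. -/
def degf {σ : Type*} (d : σ →₀ ℕ) : ℕ := d.sum fun _ k => k

/-- A formal power series has a positive radius of convergence. -/
def IsConv {σ : Type*} (f : MvPowerSeries σ ℂ) : Prop :=
  ∃ C r : ℝ, 0 < r ∧ ∀ d : σ →₀ ℕ, ‖MvPowerSeries.coeff d f‖ * r ^ degf d ≤ C

/-- Formal partial derivative with respect to the variable `i`. -/
def pder {σ : Type*} (i : σ) (f : MvPowerSeries σ ℂ) : MvPowerSeries σ ℂ :=
  fun d => ((d i + 1 : ℕ) : ℂ) * MvPowerSeries.coeff (d + Finsupp.single i 1) f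

/-- Substitution (composition) of formal power series: `msubst a f = f ∘ a`.
This formula is the correct composition whenever every `a s` has zero constant term. -/
def msubst {σ τ : Type*} [Fintype σ] [DecidableEq σ] [DecidableEq τ]
    (a : σ → MvPowerSeries τ ℂ) (f : MvPowerSeries σ ℂ) : MvPowerSeries τ ℂ :=
  fun e => ∑ d ∈ Finset.Iic (∑ s : σ, Finsupp.single s (degf e)),
    MvPowerSeries.coeff d f * MvPowerSeries.coeff e (d.prod fun s k => (a s) ^ k)

/-- The series with complex-conjugated coefficients. -/
def conjS {σ : Type*} (f : MvPowerSeries σ ℂ) : MvPowerSeries σ ℂ :=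
  MvPowerSeries.map (σ := σ) (starRingEnd ℂ) f

/-- Absolute summability of the monomials of `f` at the point `x`. -/
def SummableAt {σ : Type*} (f : MvPowerSeries σ ℂ) (x : σ → ℂ) : Prop :=
  Summable fun d : σ →₀ ℕ => ‖MvPowerSeries.coeff d f‖ * d.prod fun i k => ‖x i‖ ^ k

/-- The value at `x` of (the sum of) the series `f`. -/
def evalAt {σ : Type*} (f : MvPowerSeries σ ℂ) (x : σ → ℂ) : ℂ :=
  ∑' d : σ →₀ ℕ, MvPowerSeries.coeff d f * d.prod fun i k => x i ^ k

/- ### CR geometry in normal coordinates.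
`m = n - 1 ≥ 1`.  The variables of `Θ̄` are indexed by `Fin m ⊕ (Fin m ⊕ Unit)`:
the first block is the first (vector) argument, the second block the last two arguments. -/

variable (m : ℕ)

/-- `Θ̄(0,ζ,ξ) ≡ 0` and `Θ̄(w,0,ξ) ≡ 0` (normality), coefficientwise. -/
def NormVanish (Θ : MvPowerSeries (Fin m ⊕ (Fin m ⊕ Unit)) ℂ) : Prop :=
  (∀ d : (Fin m ⊕ (Fin m ⊕ Unit)) →₀ ℕ,
      (∀ j : Fin m, d (Sum.inl j) = 0) → MvPowerSeries.coeff d Θ = 0) ∧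
  (∀ d : (Fin m ⊕ (Fin m ⊕ Unit)) →₀ ℕ,
      (∀ j : Fin m, d (Sum.inr (Sum.inl j)) = 0) → MvPowerSeries.coeff d Θ = 0)

/-- The complexified defining series `r(t,τ) = z - ξ - iΘ̄(w,ζ,ξ)`, in the
variables `(w,z,ζ,ξ)` indexed by `(Fin m ⊕ Unit) ⊕ (Fin m ⊕ Unit)`. -/
def rSeries (Θ : MvPowerSeries (Fin m ⊕ (Fin m ⊕ Unit)) ℂ) :
    MvPowerSeries ((Fin m ⊕ Unit) ⊕ (Fin m ⊕ Unit)) ℂ :=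
  MvPowerSeries.X (Sum.inl (Sum.inr ())) - MvPowerSeries.X (Sum.inr (Sum.inr ())) -
    (MvPowerSeries.C (R := ℂ)) Complex.I *
      msubst (Sum.elim (fun j => MvPowerSeries.X (Sum.inl (Sum.inl j)))
        (Sum.elim (fun j => MvPowerSeries.X (Sum.inr (Sum.inl j)))
          (fun _ => MvPowerSeries.X (Sum.inr (Sum.inr ()))))) Θ

/-- The conjugate complexified defining series `r̄(τ,t) = ξ - z + iΘ(ζ,w,z)`, in the
variables `(w,z,ζ,ξ)`. -/
def rbarSeries (Θ : MvPowerSeries (Fin m ⊕ (Fin m ⊕ Unit)) ℂ) :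
    MvPowerSeries ((Fin m ⊕ Unit) ⊕ (Fin m ⊕ Unit)) ℂ :=
  MvPowerSeries.X (Sum.inr (Sum.inr ())) - MvPowerSeries.X (Sum.inl (Sum.inr ())) +
    (MvPowerSeries.C (R := ℂ)) Complex.I *
      msubst (Sum.elim (fun j => MvPowerSeries.X (Sum.inr (Sum.inl j)))
        (Sum.elim (fun j => MvPowerSeries.X (Sum.inl (Sum.inl j)))
          (fun _ => MvPowerSeries.X (Sum.inl (Sum.inr ()))))) (conjS Θ)

/-- Reality of the encoded hypersurface:
`ξ - z + iΘ(ζ,w,z) = α(w,z,ζ,ξ) ⬝ (z - ξ - iΘ̄(w,ζ,ξ))` for a unit `α`. -/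
def RealityCond (Θ : MvPowerSeries (Fin m ⊕ (Fin m ⊕ Unit)) ℂ) : Prop :=
  ∃ α : MvPowerSeries ((Fin m ⊕ Unit) ⊕ (Fin m ⊕ Unit)) ℂ,
    IsConv α ∧ MvPowerSeries.constantCoeff (R := ℂ) α ≠ 0 ∧
      rbarSeries m Θ = α * rSeries m Θ

/-- `Θ̄` encodes a germ of real analytic hypersurface in normal coordinates. -/
def NormalEnc (Θ : MvPowerSeries (Fin m ⊕ (Fin m ⊕ Unit)) ℂ) : Prop :=
  IsConv Θ ∧ NormVanish m Θ ∧ RealityCond m Θ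

/-- Minimality at `0` : `Θ̄(w,ζ,0) ≢ 0`. -/
def MinimalAt0 (Θ : MvPowerSeries (Fin m ⊕ (Fin m ⊕ Unit)) ℂ) : Prop :=
  ∃ d : (Fin m ⊕ (Fin m ⊕ Unit)) →₀ ℕ,
    d (Sum.inr (Sum.inr ())) = 0 ∧ MvPowerSeries.coeff d Θ ≠ 0

/-- The coefficient series `Θ'_β(w',z')` of `ζ'^β` in `Θ'(ζ',w',z')` (the series with
conjugated coefficients), with the convention `Θ'_0(w',z') := z'`. -/
def thetaCoef (Θ : MvPowerSeries (Fin m ⊕ (Fin m ⊕ Unit)) ℂ) (β : Fin m →₀ ℕ) :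
    MvPowerSeries (Fin m ⊕ Unit) ℂ :=
  if β = 0 then MvPowerSeries.X (Sum.inr ())
  else fun d => MvPowerSeries.coeff (Finsupp.sumElim β d) (conjS Θ)

/-- The substitution `ξ := z - iΘ(ζ,w,z)`, a series in the variables `(w,z,ζ)`
indexed by `(Fin m ⊕ Unit) ⊕ Fin m`. -/
def xiSub (Θ : MvPowerSeries (Fin m ⊕ (Fin m ⊕ Unit)) ℂ) :
    MvPowerSeries ((Fin m ⊕ Unit) ⊕ Fin m) ℂ :=
  MvPowerSeries.X (Sum.inl (Sum.inr ())) -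
    (MvPowerSeries.C (R := ℂ)) Complex.I *
      msubst (Sum.elim (fun j => MvPowerSeries.X (Sum.inr j))
        (Sum.elim (fun j => MvPowerSeries.X (Sum.inl (Sum.inl j)))
          (fun _ => MvPowerSeries.X (Sum.inl (Sum.inr ()))))) (conjS Θ)

/-- The assignment sending `(ζ,ξ)` to `(ζ, z - iΘ(ζ,w,z))`, with values in the
variables `(w,z,ζ)`. -/
def tauSub (Θ : MvPowerSeries (Fin m ⊕ (Fin m ⊕ Unit)) ℂ) :
    (Fin m ⊕ Unit) → MvPowerSeries ((Fin m ⊕ Unit) ⊕ Fin m) ℂ :=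
  Sum.elim (fun j => MvPowerSeries.X (Sum.inr j)) (fun _ => xiSub m Θ)

/-- `h = (g,f)` is a formal CR map `(M,0) → (M',0)` :  `h(0) = 0` and
`f(w,z) - f̄(ζ,ξ) - iΘ̄'(g(w,z), ḡ(ζ,ξ), f̄(ζ,ξ)) ≡ 0` in `ℂ⟦w,z,ζ⟧` after the
substitution `ξ := z - iΘ(ζ,w,z)`.  The components of `h` are indexed by
`Fin m ⊕ Unit`: `g = h ∘ Sum.inl` and `f = h (Sum.inr ())`. -/
def IsCRMap (Θ Θ' : MvPowerSeries (Fin m ⊕ (Fin m ⊕ Unit)) ℂ)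
    (h : (Fin m ⊕ Unit) → MvPowerSeries (Fin m ⊕ Unit) ℂ) : Prop :=
  (∀ k, MvPowerSeries.constantCoeff (R := ℂ) (h k) = 0) ∧
  msubst (fun k => MvPowerSeries.X (Sum.inl k)) (h (Sum.inr ())) -
      msubst (tauSub m Θ) (conjS (h (Sum.inr ()))) -
      (MvPowerSeries.C (R := ℂ)) Complex.I *
        msubst (Sum.elim
            (fun j => msubst (fun k => MvPowerSeries.X (Sum.inl k)) (h (Sum.inl j)))
            (Sum.elim (fun j => msubst (tauSub m Θ) (conjS (h (Sum.inl j))))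
              (fun _ => msubst (tauSub m Θ) (conjS (h (Sum.inr ())))))) Θ'
    = 0

/-- `h` is invertible : nonzero Jacobian determinant at `0`. -/
def InvertibleMap (h : (Fin m ⊕ Unit) → MvPowerSeries (Fin m ⊕ Unit) ℂ) : Prop :=
  Matrix.det (Matrix.of fun j k : Fin m ⊕ Unit =>
    MvPowerSeries.coeff (Finsupp.single k 1) (h j)) ≠ 0

/-- Holomorphic nondegeneracy at `0` witnessed by the multiindices `B i ≠ 0`
(and `β^n := 0`) : `det(∂Θ'_{β^i}/∂t'_j) ≢ 0`. -/
def HoloNondegWith (Θ' : MvPowerSeries (Fin m ⊕ (Fin m ⊕ Unit)) ℂ)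
    (B : Fin m → (Fin m →₀ ℕ)) : Prop :=
  (∀ i, B i ≠ 0) ∧
  Matrix.det (Matrix.of fun i j : Fin m ⊕ Unit =>
    pder j (thetaCoef m Θ' (Sum.elim B (fun _ => (0 : Fin m →₀ ℕ)) i))) ≠ 0

/-- Holomorphic nondegeneracy at `0`. -/
def HoloNondeg (Θ' : MvPowerSeries (Fin m ⊕ (Fin m ⊕ Unit)) ℂ) : Prop :=
  ∃ B : Fin m → (Fin m →₀ ℕ), HoloNondegWith m Θ' B

/-- The reflection function `ℛ'_h(w,z,λ̄',μ̄') = μ̄' - f(w,z) + i Σ_{β≠0} λ̄'^β Θ'_β(g(w,z),f(w,z))`,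
a series in the variables `(w,z)` (first block) and `(λ̄',μ̄')` (second block).
The series `i Σ_{β≠0} λ̄'^β Θ'_β(g(w,z),f(w,z))`, defined coefficientwise. -/
def reflTail (Θ' : MvPowerSeries (Fin m ⊕ (Fin m ⊕ Unit)) ℂ)
    (h : (Fin m ⊕ Unit) → MvPowerSeries (Fin m ⊕ Unit) ℂ) :
    MvPowerSeries ((Fin m ⊕ Unit) ⊕ (Fin m ⊕ Unit)) ℂ :=
  fun D =>
    let p := Finsupp.sumFinsuppEquivProdFinsupp D
    let q := Finsupp.sumFinsuppEquivProdFinsupp p.2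
    if q.2 = 0 ∧ q.1 ≠ 0 then
      Complex.I * MvPowerSeries.coeff p.1 (msubst h (thetaCoef m Θ' q.1))
    else 0

def reflFn (Θ' : MvPowerSeries (Fin m ⊕ (Fin m ⊕ Unit)) ℂ)
    (h : (Fin m ⊕ Unit) → MvPowerSeries (Fin m ⊕ Unit) ℂ) :
    MvPowerSeries ((Fin m ⊕ Unit) ⊕ (Fin m ⊕ Unit)) ℂ :=
  MvPowerSeries.X (Sum.inr (Sum.inr ())) -
    msubst (fun k => MvPowerSeries.X (Sum.inl k)) (h (Sum.inr ())) +
    reflTail m Θ' h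


/-- Restriction `ξ := 0` : the series `Θ̄(w,ζ,0)` in the variables `(w,ζ)`
indexed by `Fin m ⊕ Fin m`. -/
def restXi0 (Θ : MvPowerSeries (Fin m ⊕ (Fin m ⊕ Unit)) ℂ) :
    MvPowerSeries (Fin m ⊕ Fin m) ℂ :=
  msubst (Sum.elim (fun j => MvPowerSeries.X (Sum.inl j))
    (Sum.elim (fun j => MvPowerSeries.X (Sum.inr j)) (fun _ => 0))) Θ

/-- Restriction `z := 0` of a series in the variables `(w,z)`. -/
def restZ0 (f : MvPowerSeries (Fin m ⊕ Unit) ℂ) : MvPowerSeries (Fin m) ℂ :=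
  msubst (Sum.elim MvPowerSeries.X (fun _ => 0)) f

/-- `Θ'_β(g(w,z), f(w,z))`, the composition of the coefficient series `Θ'_β`
with the formal map `h = (g,f)`. -/
def thetaComp (Θ' : MvPowerSeries (Fin m ⊕ (Fin m ⊕ Unit)) ℂ)
    (h : (Fin m ⊕ Unit) → MvPowerSeries (Fin m ⊕ Unit) ℂ) (β : Fin m →₀ ℕ) :
    MvPowerSeries (Fin m ⊕ Unit) ℂ :=
  msubst h (thetaCoef m Θ' β)

/-- The reflection function restricted to the first Segre chain `z = 0`, a series in
the variables `(w, λ̄', μ̄')` indexed by `Fin m ⊕ (Fin m ⊕ Unit)`. -/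
def reflAt0 (Θ' : MvPowerSeries (Fin m ⊕ (Fin m ⊕ Unit)) ℂ)
    (h : (Fin m ⊕ Unit) → MvPowerSeries (Fin m ⊕ Unit) ℂ) :
    MvPowerSeries (Fin m ⊕ (Fin m ⊕ Unit)) ℂ :=
  msubst (Sum.elim (Sum.elim (fun j => MvPowerSeries.X (Sum.inl j)) (fun _ => 0))
    (fun k => MvPowerSeries.X (Sum.inr k))) (reflFn m Θ' h)

/-- Segre nondegeneracy at `0` witnessed by the multiindices `B i ≠ 0` :
`det(∂Θ'_{β^i}/∂w'_j (w',0))_{1≤i,j≤n-1} ≢ 0`. -/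
def SegreNondegWith (Θ' : MvPowerSeries (Fin m ⊕ (Fin m ⊕ Unit)) ℂ)
    (B : Fin m → (Fin m →₀ ℕ)) : Prop :=
  (∀ i, B i ≠ 0) ∧
  Matrix.det (Matrix.of fun i j : Fin m =>
    restZ0 m (pder (Sum.inl j) (thetaCoef m Θ' (B i)))) ≠ 0

/-- The parametrization of the second Segre chain : the assignment
`(w,z) ↦ (w, iΘ̄(w,ζ,0))`, with values in the variables `(w,ζ)`. -/
def segre2 (Θ : MvPowerSeries (Fin m ⊕ (Fin m ⊕ Unit)) ℂ) :
    (Fin m ⊕ Unit) → MvPowerSeries (Fin m ⊕ Fin m) ℂ :=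
  Sum.elim (fun j => MvPowerSeries.X (Sum.inl j))
    (fun _ => (MvPowerSeries.C (R := ℂ)) Complex.I * restXi0 m Θ)

/-- A nontrivial holomorphic vector field `L' = Σ a_k ∂/∂t'_k` with convergent
coefficients which is tangent to the hypersurface encoded by `Θ'`, i.e.
`Σ_k a_k(w',z') ∂_{t'_k}[ξ' - z' + iΘ'(ζ',w',z')]` lies in the ideal generated by
`ξ' - z' + iΘ'(ζ',w',z')` (with a convergent cofactor). -/
def IsTangentField (Θ' : MvPowerSeries (Fin m ⊕ (Fin m ⊕ Unit)) ℂ)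
    (a : (Fin m ⊕ Unit) → MvPowerSeries (Fin m ⊕ Unit) ℂ) : Prop :=
  (∀ k, IsConv (a k)) ∧
  ∃ q : MvPowerSeries ((Fin m ⊕ Unit) ⊕ (Fin m ⊕ Unit)) ℂ, IsConv q ∧
    (∑ k : Fin m ⊕ Unit,
        msubst (fun j => MvPowerSeries.X (Sum.inl j)) (a k) *
          pder (Sum.inl k) (rbarSeries m Θ'))
      = q * rbarSeries m Θ'

/-!
Since `Θ'_0 = z'`, the last row of the `n × n` Jacobian matrix of `(Θ'_{β^1}, …, Θ'_{β^{n-1}}, z')`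
is `(0, …, 0, 1)`, so its determinant is the `(n-1) × (n-1)` determinant of the `w'`-derivatives
of the `Θ'_{β^i}`. Setting `z' = 0` is a ring homomorphism `ℂ⟦w',z'⟧ → ℂ⟦w'⟧` (Mathlib's
`killCompl`), so it commutes with determinants: if that determinant vanished identically, so
would its restriction to `z' = 0`, contradicting Segre nondegeneracy.
-/

namespace SegreNondegenerate

open MvPowerSeries

lemma pder_eq_pderiv {σ : Type*} (i : σ) (f : MvPowerSeries σ ℂ) :
    pder i f = pderiv ℂ i f := by
  ext d
  rw [coeff_pderiv, mul_comm]
  show ((d i + 1 : ℕ) : ℂ) * _ = _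
  push_cast
  rfl

lemma degf_eq_degree {σ : Type*} (d : σ →₀ ℕ) : degf d = d.degree := rfl

lemma prod_X_pow_eq_monomial {σ R : Type*} [CommSemiring R] (d : σ →₀ ℕ) :
    (d.prod fun s k => (X s : MvPowerSeries σ R) ^ k) = monomial d 1 := by
  rw [← MvPolynomial.coe_monomial, MvPolynomial.monomial_eq, MvPolynomial.C_1, one_mul,
    ← MvPolynomial.coeToMvPowerSeries.ringHom_apply, map_finsuppProd]
  simp

theorem msubst_killCompl_X {σ τ : Type*} [Fintype σ] [DecidableEq σ] [DecidableEq τ]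
    (ι : τ ↪ σ) (f : MvPowerSeries σ ℂ) :
    msubst (fun s => killCompl ι (X s)) f = killCompl ι f := by
  ext e
  have hprod (d : σ →₀ ℕ) : (d.prod fun s k => killCompl ι (X s : MvPowerSeries σ ℂ) ^ k)
      = killCompl ι (monomial d 1) := by
    simp_rw [← map_pow, ← map_finsuppProd, prod_X_pow_eq_monomial]
  -- `msubst` only sums over exponents bounded by `degf e` in every variable
  have hmem : Finsupp.embDomain ι e ∈ Finset.Iic (∑ s : σ, Finsupp.single s (degf e)) := by
    refine Finset.mem_Iic.2 fun s => ?_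
    calc Finsupp.embDomain ι e s ≤ (Finsupp.embDomain ι e).degree := Finsupp.le_degree s _
      _ = (∑ t : σ, Finsupp.single t (degf e)) s := by
        simp [Finsupp.embDomain_eq_mapDomain, Finsupp.degree_mapDomain, degf_eq_degree,
          Finsupp.single_apply]
  show ∑ d ∈ _, _ = _
  simp_rw [hprod, coeff_killCompl, coeff_monomial, mul_ite, mul_one, mul_zero]
  rw [Finset.sum_ite_eq, if_pos hmem]

variable {m : ℕ}

lemma restZ0_eq_killCompl (f : MvPowerSeries (Fin m ⊕ Unit) ℂ) :
    restZ0 m f = killCompl Function.Embedding.inl f := by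
  have hsubst : (Sum.elim X fun _ => 0 : Fin m ⊕ Unit → MvPowerSeries (Fin m) ℂ)
      = fun s => killCompl Function.Embedding.inl (X s) := by
    ext1 (j | u)
    · exact (killCompl_X _).symm
    · exact (killCompl_X_eq_zero (by simp)).symm
  rw [restZ0, hsubst, msubst_killCompl_X]

lemma thetaCoef_zero (Θ' : MvPowerSeries (Fin m ⊕ (Fin m ⊕ Unit)) ℂ) :
    thetaCoef m Θ' 0 = X (Sum.inr ()) := if_pos rfl

lemma det_jacobian_eq_det_pderiv_inl (Θ' : MvPowerSeries (Fin m ⊕ (Fin m ⊕ Unit)) ℂ)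
    (B : Fin m → (Fin m →₀ ℕ)) :
    (Matrix.of fun i j : Fin m ⊕ Unit =>
        pder j (thetaCoef m Θ' (Sum.elim B (fun _ => (0 : Fin m →₀ ℕ)) i))).det
      = (Matrix.of fun i j : Fin m => pderiv ℂ (Sum.inl j) (thetaCoef m Θ' (B i))).det := by
  set M := Matrix.of fun i j : Fin m ⊕ Unit =>
    pder j (thetaCoef m Θ' (Sum.elim B (fun _ => (0 : Fin m →₀ ℕ)) i))
  have h21 : M.toBlocks₂₁ = 0 := by
    ext u j
    simp [M, Matrix.toBlocks₂₁, thetaCoef_zero, pder_eq_pderiv]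
  have h22 : M.toBlocks₂₂ = 1 := by
    ext u v
    simp [M, Matrix.toBlocks₂₂, thetaCoef_zero, pder_eq_pderiv]
  rw [← M.fromBlocks_toBlocks, h21, h22, Matrix.det_fromBlocks_zero₂₁, Matrix.det_one, mul_one]
  congr 1
  ext1 i j
  exact pder_eq_pderiv _ _

end SegreNondegenerate

theorem segre_nondegenerate_implies_holomorphically_nondegenerate_general
    (m : ℕ)
    (Θ' : MvPowerSeries (Fin m ⊕ (Fin m ⊕ Unit)) ℂ)
    (B : Fin m → (Fin m →₀ ℕ))
    (hSegre : SegreNondegWith m Θ' B) :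
    HoloNondegWith m Θ' B := by
  obtain ⟨hB, hdet⟩ := hSegre
  refine ⟨hB, fun hzero => hdet ?_⟩
  rw [SegreNondegenerate.det_jacobian_eq_det_pderiv_inl] at hzero
  have hmap := (MvPowerSeries.killCompl (R := ℂ) Function.Embedding.inl).map_det
    (Matrix.of fun i j : Fin m => MvPowerSeries.pderiv ℂ (Sum.inl j) (thetaCoef m Θ' (B i)))
  rw [hzero, map_zero] at hmap
  simp_rw [SegreNondegenerate.restZ0_eq_killCompl, SegreNondegenerate.pder_eq_pderiv]
  exact hmap.symm

/-- **Lemma 5.15.** If `(M',0)` is Segre nondegenerate at `0`, witnessed by the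
multiindices `β^1,…,β^{n-1} ≠ 0`, then with the same multiindices (and `β^n := 0`)
it is holomorphically nondegenerate at `0`. -/
theorem segre_nondegenerate_implies_holomorphically_nondegenerate
    (m : ℕ) (hm : 1 ≤ m)
    (Θ' : MvPowerSeries (Fin m ⊕ (Fin m ⊕ Unit)) ℂ)
    (hconv : IsConv Θ') (hnorm : NormVanish m Θ')
    (B : Fin m → (Fin m →₀ ℕ))
    (hSegre : SegreNondegWith m Θ' B) :
    HoloNondegWith m Θ' B :=
  segre_nondegenerate_implies_holomorphically_nondegenerate_general m Θ' B hSegre
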